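/- Let (X_n, Z_n), n = 1, 2, ..., be a sequence of pairs of real-valued random variables, where each X_n has support equal to a finite set 𝒳_n with 2 ≤ |𝒳_n| ≤ K for a constant K independent of n, and each X_n has finite positive variance. Define X̆_n = X_n · V[X_n]^{-1/2}, with support 𝒳̆_n ⊂ ℝ, let ε*_n be one half of the minimum distance between any two distinct points of 𝒳̆_n, and suppose ε* = inf_n ε*_n > 0. If ν(X_n | Z_n) → 0 as n → ∞, then H(X_n | Z_n) → 0 and H(X_n) − I(X_n ; Z_n) → 0 as n → ∞. -/

import Mathlib

/-!
Write `q_z(x) = P(X = x | Z = z)` and `G(z) = ∑ₓ q_z(x) (1 - q_z(x))` for the Gini impurity of the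
conditional law. The points of the support are `2 ε √V[X]`-separated, so at most one of them lies
within `ε √V[X]` of the conditional mean, and the conditional variance is at least
`ε² V[X] G(z) / 2`; integrating, `E[G(Z)] ≤ 2 ν(X|Z) / ε²`. On the other hand
`-p log p ≤ 2 (p (1 - p))^{1/4}`, so by Jensen's inequality for the concave fourth root
`H(X|Z) ≤ 2 |𝒳| E[G(Z)^{1/4}] ≤ 2 K (2 ν(X|Z) / ε²)^{1/4}`, which tends to `0`; and
`H(X) - I(X;Z)` is the same sequence.
-/

open MeasureTheory ProbabilityTheory Real Filter

/-- Conditional mean `E[Z | σ(X)]`. -/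
noncomputable def condMean {Ω β : Type*} [MeasurableSpace Ω] [MeasurableSpace β]
    (μ : Measure Ω) (Z : Ω → ℝ) (X : Ω → β) : Ω → ℝ :=
  μ[Z | MeasurableSpace.comap X inferInstance]

/-- `ν(X|Z) = E{V[X|Z]}/V[X] = E[(X − E[X|Z])²] / V[X]`. -/
noncomputable def nuScalar {Ω β : Type*} [MeasurableSpace Ω] [MeasurableSpace β]
    (μ : Measure Ω) (X : Ω → ℝ) (Z : Ω → β) : ℝ :=
  (∫ ω, (X ω - condMean μ X Z ω) ^ 2 ∂μ) / variance X μ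

/-- Discrete (Shannon) entropy of `X`, whose support is the finite set `S`. -/
noncomputable def finEntropy {Ω : Type*} [MeasurableSpace Ω] (μ : Measure Ω)
    (X : Ω → ℝ) (S : Finset ℝ) : ℝ :=
  ∑ x ∈ S, Real.negMulLog (μ (X ⁻¹' {x})).toReal

/-- Conditional entropy `H(X|Z)` of the finitely supported `X` given the real-valued `Z`,
defined via the regular conditional distribution of `X` given `Z`. -/
noncomputable def finCondEntropy {Ω : Type*} [MeasurableSpace Ω] (μ : Measure Ω)
    [IsFiniteMeasure μ] (X Z : Ω → ℝ) (S : Finset ℝ) : ℝ :=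
  ∫ z, ∑ x ∈ S, Real.negMulLog ((condDistrib X Z μ z) {x}).toReal ∂(Measure.map Z μ)

/-- Mutual information `I(X;Z) = H(X) − H(X|Z)` for finitely supported `X`. -/
noncomputable def finMutualInfo {Ω : Type*} [MeasurableSpace Ω] (μ : Measure Ω)
    [IsFiniteMeasure μ] (X Z : Ω → ℝ) (S : Finset ℝ) : ℝ :=
  finEntropy μ X S - finCondEntropy μ X Z S

lemma negMulLog_le_two_mul_sqrt {p : ℝ} (hp : 0 ≤ p) : negMulLog p ≤ 2 * √p := by
  rcases hp.eq_or_lt with rfl | hp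
  · simp
  have hsp : 0 < √p := Real.sqrt_pos.2 hp
  have hlog : Real.log (√p)⁻¹ ≤ (√p)⁻¹ - 1 := Real.log_le_sub_one_of_pos (inv_pos.2 hsp)
  rw [Real.log_inv, Real.log_sqrt hp.le] at hlog
  calc negMulLog p = 2 * p * -(Real.log p / 2) := by rw [negMulLog]; ring
    _ ≤ 2 * p * ((√p)⁻¹ - 1) := by gcongr
    _ ≤ 2 * (p / √p) := by rw [div_eq_mul_inv]; nlinarith
    _ = 2 * √p := by rw [Real.div_sqrt]

lemma negMulLog_le_two_mul_sqrt_sqrt {p : ℝ} (h0 : 0 ≤ p) (h1 : p ≤ 1) :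
    negMulLog p ≤ 2 * √(√(p * (1 - p))) := by
  rcases le_or_gt p (1 / 2) with hp | hp
  · calc negMulLog p ≤ 2 * √p := negMulLog_le_two_mul_sqrt h0
      _ = 2 * √(√(p * p)) := by rw [Real.sqrt_mul_self h0]
      _ ≤ 2 * √(√(p * (1 - p))) := by gcongr; linarith
  · have hroot : 1 - p ≤ √(√(p * (1 - p))) := by
      rw [Real.le_sqrt (by linarith) (Real.sqrt_nonneg _),
        Real.le_sqrt (by positivity) (by nlinarith)]
      have hq : 0 ≤ 1 - p := by linarith
      have hcube : (1 - p) ^ 3 ≤ p := by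
        nlinarith [pow_le_pow_left₀ hq (by linarith : 1 - p ≤ 1 / 2) 3]
      nlinarith [mul_le_mul_of_nonneg_left hcube hq]
    linarith [negMulLog_le_one_sub_self h0]

lemma concaveOn_sqrt_sqrt : ConcaveOn ℝ (Set.Ici 0) fun t : ℝ => √(√t) := by
  refine (Real.concaveOn_rpow (p := 1 / 4) (by norm_num) (by norm_num)).congr fun t ht => ?_
  rw [Real.sqrt_eq_rpow, Real.sqrt_eq_rpow, ← Real.rpow_mul (Set.mem_Ici.1 ht)]
  norm_num

lemma sq_mul_sum_mul_one_sub_le_of_separated {S : Finset ℝ} {q : ℝ → ℝ}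
    (hq : ∀ x ∈ S, 0 ≤ q x) (hsum : ∑ x ∈ S, q x = 1) {η : ℝ} (hη : 0 ≤ η)
    (hsep : ∀ x ∈ S, ∀ y ∈ S, x ≠ y → 2 * η ≤ |x - y|) (g : ℝ) :
    η ^ 2 * ∑ x ∈ S, q x * (1 - q x) ≤ 2 * ∑ x ∈ S, q x * (x - g) ^ 2 := by
  set T := S.filter fun x => η ≤ |x - g|
  have hfar : η ^ 2 * ∑ x ∈ T, q x ≤ ∑ x ∈ S, q x * (x - g) ^ 2 := by
    rw [Finset.mul_sum]
    refine (Finset.sum_le_sum fun x hx => ?_).trans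
      (Finset.sum_le_sum_of_subset_of_nonneg (Finset.filter_subset _ S)
        fun x hx _ => mul_nonneg (hq x hx) (sq_nonneg _))
    obtain ⟨hxS, hxg⟩ := Finset.mem_filter.1 hx
    have hsq : η ^ 2 ≤ (x - g) ^ 2 := sq_abs (x - g) ▸ pow_le_pow_left₀ hη hxg 2
    rw [mul_comm]
    exact mul_le_mul_of_nonneg_left hsq (hq x hxS)
  -- By separation at most one point `a` of `S` lies within `η` of `g`, and `T = S.erase a`.
  have hgini : ∑ x ∈ S, q x * (1 - q x) ≤ 2 * ∑ x ∈ T, q x := by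
    by_cases hnear : ∃ a ∈ S, |a - g| < η
    · obtain ⟨a, ha, hag⟩ := hnear
      have hT : T = S.erase a := by
        ext x
        simp only [T, Finset.mem_filter, Finset.mem_erase]
        refine ⟨fun ⟨hx, hxg⟩ => ⟨by rintro rfl; linarith, hx⟩, fun ⟨hxa, hx⟩ => ⟨hx, ?_⟩⟩
        by_contra! hxg
        have := hsep x hx a ha hxa
        linarith [abs_sub_le x g a, abs_sub_comm g a]
      have hTsum : ∑ x ∈ T, q x = 1 - q a := by rw [hT, Finset.sum_erase_eq_sub ha, hsum]
      have hqa : q a ≤ 1 := hsum ▸ Finset.single_le_sum hq ha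
      have hrest : ∑ x ∈ S.erase a, q x * (1 - q x) ≤ 1 - q a := by
        rw [← hTsum, hT]
        exact Finset.sum_le_sum fun x hx => by nlinarith [hq x (Finset.mem_of_mem_erase hx)]
      rw [← Finset.add_sum_erase S _ ha, hTsum]
      nlinarith [hq a ha]
    · simp only [not_exists, not_and, not_lt] at hnear
      have hT : T = S := Finset.filter_true_of_mem hnear
      rw [hT, hsum]
      have : ∑ x ∈ S, q x * (1 - q x) ≤ ∑ x ∈ S, q x :=
        Finset.sum_le_sum fun x hx => by nlinarith [hq x hx]
      linarith
  calc η ^ 2 * ∑ x ∈ S, q x * (1 - q x) ≤ η ^ 2 * (2 * ∑ x ∈ T, q x) := by gcongr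
    _ ≤ 2 * ∑ x ∈ S, q x * (x - g) ^ 2 := by linarith

section FiniteSupport

variable {α : Type*} [MeasurableSpace α]

noncomputable def giniImpurity (ν : Measure α) (S : Finset α) : ℝ :=
  ∑ x ∈ S, ν.real {x} * (1 - ν.real {x})

lemma giniImpurity_nonneg (ν : Measure α) [IsProbabilityMeasure ν] (S : Finset α) :
    0 ≤ giniImpurity ν S :=
  Finset.sum_nonneg fun _ _ => mul_nonneg measureReal_nonneg (sub_nonneg.2 measureReal_le_one)

lemma sum_negMulLog_measureReal_le (ν : Measure α) [IsProbabilityMeasure ν] (S : Finset α) :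
    ∑ x ∈ S, negMulLog (ν.real {x}) ≤ 2 * S.card * √(√(giniImpurity ν S)) :=
  calc ∑ x ∈ S, negMulLog (ν.real {x}) ≤ ∑ _x ∈ S, 2 * √(√(giniImpurity ν S)) :=
        Finset.sum_le_sum fun x hx =>
          (negMulLog_le_two_mul_sqrt_sqrt measureReal_nonneg measureReal_le_one).trans <| by
            gcongr
            exact Finset.single_le_sum (f := fun y => ν.real {y} * (1 - ν.real {y}))
              (fun y _ => mul_nonneg measureReal_nonneg (sub_nonneg.2 measureReal_le_one)) hx
    _ = 2 * S.card * √(√(giniImpurity ν S)) := by rw [Finset.sum_const, nsmul_eq_mul]; ring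

variable [MeasurableSingletonClass α]

lemma giniImpurity_le_one (ν : Measure α) [IsProbabilityMeasure ν] (S : Finset α) :
    giniImpurity ν S ≤ 1 :=
  calc giniImpurity ν S ≤ ∑ x ∈ S, ν.real {x} :=
        Finset.sum_le_sum fun _ _ => mul_le_of_le_one_right measureReal_nonneg
          (sub_le_self _ measureReal_nonneg)
    _ = ν.real S := sum_measureReal_singleton S
    _ ≤ 1 := measureReal_le_one

lemma integral_eq_sum_of_ae_mem {E : Type*} [NormedAddCommGroup E] [NormedSpace ℝ E]
    [CompleteSpace E] {ν : Measure α} [IsFiniteMeasure ν] {S : Finset α} (hS : ∀ᵐ x ∂ν, x ∈ S)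
    (f : α → E) :
    ∫ x, f x ∂ν = ∑ x ∈ S, ν.real {x} • f x := by
  rw [← Measure.restrict_eq_self_of_ae_mem hS, setIntegral_finset S IntegrableOn.finset,
    Measure.restrict_eq_self_of_ae_mem hS]

lemma sum_measureReal_singleton_eq_one_of_ae_mem {ν : Measure α} [IsProbabilityMeasure ν]
    {S : Finset α} (hS : ∀ᵐ x ∂ν, x ∈ S) : ∑ x ∈ S, ν.real {x} = 1 := by
  simpa using (integral_eq_sum_of_ae_mem hS fun _ => (1 : ℝ)).symm

end FiniteSupport

lemma sq_mul_giniImpurity_le_two_mul_variance {ν : Measure ℝ} [IsProbabilityMeasure ν]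
    {S : Finset ℝ} (hS : ∀ᵐ x ∂ν, x ∈ S) {η : ℝ} (hη : 0 ≤ η)
    (hsep : ∀ x ∈ S, ∀ y ∈ S, x ≠ y → 2 * η ≤ |x - y|) :
    η ^ 2 * giniImpurity ν S ≤ 2 * variance id ν := by
  rw [variance_eq_integral aemeasurable_id, integral_eq_sum_of_ae_mem hS]
  simp only [id, smul_eq_mul]
  exact sq_mul_sum_mul_one_sub_le_of_separated (fun _ _ => measureReal_nonneg)
    (sum_measureReal_singleton_eq_one_of_ae_mem hS) hη hsep _

section Kernel

variable {α β : Type*} [MeasurableSpace α] [MeasurableSingletonClass α] [MeasurableSpace β]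
  {κ : Kernel β α}

lemma measurable_giniImpurity (S : Finset α) : Measurable fun z => giniImpurity (κ z) S :=
  Finset.measurable_sum _ fun x _ =>
    let hq := (κ.measurable_coe (measurableSet_singleton x)).ennreal_toReal
    hq.mul (hq.const_sub 1)

lemma integrable_giniImpurity [IsMarkovKernel κ] {ρ : Measure β} [IsFiniteMeasure ρ]
    (S : Finset α) : Integrable (fun z => giniImpurity (κ z) S) ρ :=
  (integrable_const (1 : ℝ)).mono' (measurable_giniImpurity S).aestronglyMeasurable
    (ae_of_all _ fun z => by
      rw [Real.norm_of_nonneg (giniImpurity_nonneg _ S)]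
      exact giniImpurity_le_one _ S)

lemma integral_sum_negMulLog_le [IsMarkovKernel κ] (ρ : Measure β) [IsProbabilityMeasure ρ]
    (S : Finset α) :
    ∫ z, ∑ x ∈ S, negMulLog ((κ z).real {x}) ∂ρ ≤
      2 * S.card * √(√(∫ z, giniImpurity (κ z) S ∂ρ)) := by
  have hroot : Integrable (fun z => √(√(giniImpurity (κ z) S))) ρ :=
    (integrable_const (1 : ℝ)).mono' (measurable_giniImpurity S).sqrt.sqrt.aestronglyMeasurable
      (ae_of_all _ fun z => by
        rw [Real.norm_of_nonneg (Real.sqrt_nonneg _), Real.sqrt_le_one, Real.sqrt_le_one]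
        exact giniImpurity_le_one _ S)
  have hjensen : ∫ z, √(√(giniImpurity (κ z) S)) ∂ρ ≤ √(√(∫ z, giniImpurity (κ z) S ∂ρ)) :=
    concaveOn_sqrt_sqrt.le_map_integral (by fun_prop) isClosed_Ici
      (ae_of_all _ fun z => giniImpurity_nonneg _ S) (integrable_giniImpurity S) hroot
  calc ∫ z, ∑ x ∈ S, negMulLog ((κ z).real {x}) ∂ρ
      ≤ ∫ z, 2 * S.card * √(√(giniImpurity (κ z) S)) ∂ρ :=
        integral_mono_of_nonneg
          (ae_of_all _ fun z => Finset.sum_nonneg fun _ _ =>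
            negMulLog_nonneg measureReal_nonneg measureReal_le_one)
          (hroot.const_mul _) (ae_of_all _ fun z => sum_negMulLog_measureReal_le _ S)
    _ = 2 * S.card * ∫ z, √(√(giniImpurity (κ z) S)) ∂ρ := integral_const_mul _ _
    _ ≤ 2 * S.card * √(√(∫ z, giniImpurity (κ z) S ∂ρ)) := by gcongr

end Kernel

section CondDistrib

variable {Ω β : Type*} [MeasurableSpace Ω] [MeasurableSpace β] {μ : Measure Ω}
  [IsProbabilityMeasure μ] {X : Ω → ℝ} {Z : Ω → β}

lemma ae_ae_mem_condDistrib (hX : Measurable X) (hZ : Measurable Z) {s : Set ℝ}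
    (hs : MeasurableSet s) (hXs : ∀ᵐ ω ∂μ, X ω ∈ s) :
    ∀ᵐ z ∂μ.map Z, ∀ᵐ x ∂condDistrib X Z μ z, x ∈ s := by
  refine Measure.ae_ae_of_ae_compProd (p := fun p : β × ℝ => p.2 ∈ s) ?_
  rw [compProd_map_condDistrib hX.aemeasurable,
    ae_map_iff (hZ.prodMk hX).aemeasurable (measurable_snd hs)]
  exact hXs

lemma condMean_ae_eq_integral_condDistrib (hZ : Measurable Z) (hXint : Integrable X μ) :
    condMean μ X Z =ᵐ[μ] fun ω => ∫ x, x ∂condDistrib X Z μ (Z ω) :=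
  condExp_ae_eq_integral_condDistrib' hZ hXint

lemma integrable_sq_sub_integral_condDistrib (hX : Measurable X) (hZ : Measurable Z)
    (hXL2 : MemLp X 2 μ) :
    Integrable (fun p : β × ℝ => (p.2 - ∫ x, x ∂condDistrib X Z μ p.1) ^ 2)
      (μ.map fun ω => (Z ω, X ω)) := by
  have hmean : Measurable fun z => ∫ x, x ∂condDistrib X Z μ z :=
    (measurable_snd.stronglyMeasurable.integral_condDistrib
      (f := fun p : β × ℝ => p.2)).measurable
  have hf : Measurable fun p : β × ℝ => (p.2 - ∫ x, x ∂condDistrib X Z μ p.1) ^ 2 :=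
    (measurable_snd.sub (hmean.comp measurable_fst)).pow_const 2
  rw [integrable_map_measure hf.aestronglyMeasurable (hZ.prodMk hX).aemeasurable]
  have hres : MemLp (X - condMean μ X Z) 2 μ := hXL2.sub (hXL2.condExp one_le_two)
  refine hres.integrable_sq.congr ?_
  filter_upwards [condMean_ae_eq_integral_condDistrib hZ (hXL2.integrable one_le_two)]
    with ω hω
  simp only [Pi.sub_apply, hω, Function.comp_apply]

lemma integrable_variance_condDistrib (hX : Measurable X) (hZ : Measurable Z)
    (hXL2 : MemLp X 2 μ) :
    Integrable (fun z => variance id (condDistrib X Z μ z)) (μ.map Z) := by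
  simpa only [variance_eq_integral aemeasurable_id, id] using
    (integrable_sq_sub_integral_condDistrib hX hZ hXL2).integral_condDistrib_map
      hX.aemeasurable

lemma integral_sq_sub_condMean_eq_integral_variance (hX : Measurable X) (hZ : Measurable Z)
    (hXL2 : MemLp X 2 μ) :
    ∫ ω, (X ω - condMean μ X Z ω) ^ 2 ∂μ = ∫ z, variance id (condDistrib X Z μ z) ∂μ.map Z := by
  have hf := integrable_sq_sub_integral_condDistrib hX hZ hXL2
  have hdis : μ.map Z ⊗ₘ condDistrib X Z μ = μ.map fun ω => (Z ω, X ω) :=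
    compProd_map_condDistrib hX.aemeasurable
  calc ∫ ω, (X ω - condMean μ X Z ω) ^ 2 ∂μ
      = ∫ ω, (X ω - ∫ x, x ∂condDistrib X Z μ (Z ω)) ^ 2 ∂μ := by
        refine integral_congr_ae ?_
        filter_upwards [condMean_ae_eq_integral_condDistrib hZ (hXL2.integrable one_le_two)]
          with ω hω
        rw [hω]
    _ = ∫ p, (p.2 - ∫ x, x ∂condDistrib X Z μ p.1) ^ 2
          ∂(μ.map Z ⊗ₘ condDistrib X Z μ) := by
        rw [hdis, integral_map (hZ.prodMk hX).aemeasurable hf.1]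
    _ = ∫ z, variance id (condDistrib X Z μ z) ∂μ.map Z := by
        rw [Measure.integral_compProd (hdis ▸ hf)]
        simp only [variance_eq_integral aemeasurable_id, id]

lemma integral_giniImpurity_condDistrib_le (hX : Measurable X) (hZ : Measurable Z)
    {S : Finset ℝ} (hXS : ∀ᵐ ω ∂μ, X ω ∈ S) (hXL2 : MemLp X 2 μ) (hvar : 0 < variance X μ)
    {ε : ℝ} (hε : 0 < ε) (hsep : ∀ x ∈ S, ∀ y ∈ S, x ≠ y →
      2 * ε ≤ |x / √(variance X μ) - y / √(variance X μ)|) :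
    ∫ z, giniImpurity (condDistrib X Z μ z) S ∂μ.map Z ≤ 2 * nuScalar μ X Z / ε ^ 2 := by
  set σ := √(variance X μ)
  have hσ : 0 < σ := Real.sqrt_pos.2 hvar
  have hsep' : ∀ x ∈ S, ∀ y ∈ S, x ≠ y → 2 * (ε * σ) ≤ |x - y| := fun x hx y hy hxy => by
    have := hsep x hx y hy hxy
    rw [div_sub_div_same, abs_div, abs_of_pos hσ, le_div_iff₀ hσ] at this
    linarith
  have hpoint : ∀ᵐ z ∂μ.map Z, (ε * σ) ^ 2 * giniImpurity (condDistrib X Z μ z) S ≤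
      2 * variance id (condDistrib X Z μ z) := by
    filter_upwards [ae_ae_mem_condDistrib hX hZ S.measurableSet hXS] with z hz
    exact sq_mul_giniImpurity_le_two_mul_variance hz (by positivity) hsep'
  have hintegral : (ε * σ) ^ 2 * ∫ z, giniImpurity (condDistrib X Z μ z) S ∂μ.map Z ≤
      2 * ∫ ω, (X ω - condMean μ X Z ω) ^ 2 ∂μ := by
    rw [integral_sq_sub_condMean_eq_integral_variance hX hZ hXL2, ← integral_const_mul,
      ← integral_const_mul]
    exact integral_mono_ae ((integrable_giniImpurity S).const_mul _)
      ((integrable_variance_condDistrib hX hZ hXL2).const_mul _) hpoint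
  rw [le_div_iff₀ (by positivity), nuScalar, ← Real.sq_sqrt (variance_nonneg X μ)]
  field_simp
  linarith

end CondDistrib

lemma finCondEntropy_nonneg {Ω : Type*} [MeasurableSpace Ω] (μ : Measure Ω) [IsFiniteMeasure μ]
    (X Z : Ω → ℝ) (S : Finset ℝ) : 0 ≤ finCondEntropy μ X Z S :=
  integral_nonneg fun _ => Finset.sum_nonneg fun _ _ =>
    negMulLog_nonneg measureReal_nonneg measureReal_le_one

lemma finCondEntropy_le {Ω : Type*} [MeasurableSpace Ω] {μ : Measure Ω}
    [IsProbabilityMeasure μ] {X Z : Ω → ℝ} (hX : Measurable X) (hZ : Measurable Z) {S : Finset ℝ}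
    (hXS : ∀ᵐ ω ∂μ, X ω ∈ S) (hXL2 : MemLp X 2 μ) (hvar : 0 < variance X μ)
    {ε : ℝ} (hε : 0 < ε) (hsep : ∀ x ∈ S, ∀ y ∈ S, x ≠ y →
      2 * ε ≤ |x / √(variance X μ) - y / √(variance X μ)|) :
    finCondEntropy μ X Z S ≤ 2 * S.card * √(√(2 * nuScalar μ X Z / ε ^ 2)) := by
  have := Measure.isProbabilityMeasure_map (μ := μ) hZ.aemeasurable
  refine (integral_sum_negMulLog_le (κ := condDistrib X Z μ) (μ.map Z) S).trans ?_
  gcongr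
  exact integral_giniImpurity_condDistrib_le hX hZ hXS hXL2 hvar hε hsep

theorem stmt_1_general
    {Ω : Type*} [MeasurableSpace Ω] (μ : Measure Ω) [IsProbabilityMeasure μ]
    (X Z : ℕ → Ω → ℝ) (S : ℕ → Finset ℝ) (K : ℕ)
    (hXmeas : ∀ n, Measurable (X n)) (hZmeas : ∀ n, Measurable (Z n))
    -- the support of `Xₙ` is the finite set `𝒳ₙ = S n`, with `2 ≤ |𝒳ₙ| ≤ K`
    (hK : ∀ n, (S n).card ≤ K)
    (hsupp : ∀ n, μ (X n ⁻¹' ↑(S n)) = 1)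
    -- `Xₙ` has finite positive variance
    (hXL2 : ∀ n, MemLp (X n) 2 μ) (hXvar : ∀ n, 0 < variance (X n) μ)
    -- `ε* = inf_n ε*ₙ > 0`: any two distinct points of the standardized support
    -- `𝒳̆ₙ = { x / V[Xₙ]^{1/2} : x ∈ 𝒳ₙ }` are separated by at least `2 ε*`
    (hsep : ∃ ε : ℝ, 0 < ε ∧ ∀ n, ∀ x ∈ S n, ∀ y ∈ S n, x ≠ y →
      2 * ε ≤ |x / Real.sqrt (variance (X n) μ) - y / Real.sqrt (variance (X n) μ)|)
    -- `ν(Xₙ|Zₙ) → 0`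
    (hnu : Tendsto (fun n => nuScalar μ (X n) (Z n)) atTop (nhds 0)) :
    Tendsto (fun n => finCondEntropy μ (X n) (Z n) (S n)) atTop (nhds 0) ∧
    Tendsto (fun n => finEntropy μ (X n) (S n) - finMutualInfo μ (X n) (Z n) (S n))
      atTop (nhds 0) := by
  obtain ⟨ε, hε, hsep⟩ := hsep
  have hXS : ∀ n, ∀ᵐ ω ∂μ, X n ω ∈ S n := fun n =>
    (ae_iff_measure_eq ((hXmeas n) (S n).measurableSet).nullMeasurableSet).2 <| by
      rw [measure_univ]; exact hsupp n
  have hbound : ∀ n, finCondEntropy μ (X n) (Z n) (S n) ≤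
      2 * K * √(√(2 * nuScalar μ (X n) (Z n) / ε ^ 2)) := fun n =>
    (finCondEntropy_le (hXmeas n) (hZmeas n) (hXS n) (hXL2 n) (hXvar n) hε (hsep n)).trans
      (by gcongr; exact_mod_cast hK n)
  have hlim : Tendsto (fun n => 2 * K * √(√(2 * nuScalar μ (X n) (Z n) / ε ^ 2)))
      atTop (nhds 0) := by
    simpa using (((hnu.const_mul 2).div_const (ε ^ 2)).sqrt.sqrt).const_mul (2 * (K : ℝ))
  have hcond := tendsto_of_tendsto_of_tendsto_of_le_of_le tendsto_const_nhds hlim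
    (fun n => finCondEntropy_nonneg μ (X n) (Z n) (S n)) hbound
  refine ⟨hcond, ?_⟩
  simpa only [finMutualInfo, sub_sub_cancel] using hcond

/-- Theorem 2 of the paper. If `ν(Xₙ|Zₙ) → 0` and the points of the
standardized supports `𝒳̆ₙ` of `X̆ₙ = Xₙ · V[Xₙ]^{-1/2}` are uniformly separated
(`ε* = inf_n ε*ₙ > 0`), then `H(Xₙ|Zₙ) → 0` and hence `H(Xₙ) − I(Xₙ;Zₙ) → 0`. -/
theorem stmt_1
    {Ω : Type*} [MeasurableSpace Ω] (μ : Measure Ω) [IsProbabilityMeasure μ]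
    (X Z : ℕ → Ω → ℝ) (S : ℕ → Finset ℝ) (K : ℕ)
    (hXmeas : ∀ n, Measurable (X n)) (hZmeas : ∀ n, Measurable (Z n))
    -- the support of `Xₙ` is the finite set `𝒳ₙ = S n`, with `2 ≤ |𝒳ₙ| ≤ K`
    (hcard : ∀ n, 2 ≤ (S n).card) (hK : ∀ n, (S n).card ≤ K)
    (hsupp : ∀ n, μ (X n ⁻¹' ↑(S n)) = 1)
    (hatom : ∀ n, ∀ x ∈ S n, μ (X n ⁻¹' {x}) ≠ 0)
    -- `Xₙ` has finite positive variance
    (hXL2 : ∀ n, MemLp (X n) 2 μ) (hXvar : ∀ n, 0 < variance (X n) μ)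
    -- `ε* = inf_n ε*ₙ > 0`: any two distinct points of the standardized support
    -- `𝒳̆ₙ = { x / V[Xₙ]^{1/2} : x ∈ 𝒳ₙ }` are separated by at least `2 ε*`
    (hsep : ∃ ε : ℝ, 0 < ε ∧ ∀ n, ∀ x ∈ S n, ∀ y ∈ S n, x ≠ y →
      2 * ε ≤ |x / Real.sqrt (variance (X n) μ) - y / Real.sqrt (variance (X n) μ)|)
    -- `ν(Xₙ|Zₙ) → 0`
    (hnu : Tendsto (fun n => nuScalar μ (X n) (Z n)) atTop (nhds 0)) :
    Tendsto (fun n => finCondEntropy μ (X n) (Z n) (S n)) atTop (nhds 0) ∧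
    Tendsto (fun n => finEntropy μ (X n) (S n) - finMutualInfo μ (X n) (Z n) (S n))
      atTop (nhds 0) :=
  stmt_1_general μ X Z S K hXmeas hZmeas hK hsupp hXL2 hXvar hsep hnu
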